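/- If f : ℤ_p → ℤ_p is 1-Lipschitz, measure-preserving, XOR-additive (f(x XOR y) = f(x) XOR f(y)) and AND-multiplicative (f(x AND y) = f(x) AND f(y)), and f is not identically 0 or 1, then f is the identity map. -/

import Mathlib

/-!
Write `χ j k` for the `k`-th digit of `f (p ^ j)`. XOR-additivity, together with the fact that a
1-Lipschitz map sends `x` to an `f x` whose `k`-th digit only depends on `x₀, …, x_k`, gives
`(f x)_k = ∑_{j ≤ k} x_j χ j k mod p`. AND-multiplicativity makes every `χ j k` an idempotent of
`𝔽_p`, hence `0` or `1`, with `χ i k * χ j k = 0` for `i ≠ j`. So the `k`-th digit of `f` is either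
identically `0` or a copy of the digit `x_j` for one `j ≤ k`. As `f` preserves Haar measure, the
preimage of a nonempty open set is nonempty; by induction on `k` this excludes the zero digit and
the case `j < k` (where `(f x)_k = (f x)_j` for all `x`), so `(f x)_k = x_k`.
-/

open MeasureTheory

variable (p : ℕ) [Fact p.Prime]

noncomputable instance : MeasurableSpace ℤ_[p] := borel _
instance : BorelSpace ℤ_[p] := ⟨rfl⟩

/-- The normalized Haar measure on `ℤ_[p]` (total mass 1). -/
noncomputable def haarZp : Measure ℤ_[p] := Measure.addHaarMeasure ⊤

/-- The k-th digit of the canonical p-adic expansion of `x`. -/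
noncomputable def digit (x : ℤ_[p]) (k : ℕ) : ℕ := x.appr (k + 1) / p ^ k

/-- Digit-wise addition modulo `p` on `ℤ_[p]`. -/
noncomputable def pXOR (x y : ℤ_[p]) : ℤ_[p] :=
  ∑' k : ℕ, (((digit p x k + digit p y k) % p : ℕ) : ℤ_[p]) * (p : ℤ_[p]) ^ k

/-- Digit-wise multiplication modulo `p` on `ℤ_[p]`. -/
noncomputable def pAND (x y : ℤ_[p]) : ℤ_[p] :=
  ∑' k : ℕ, (((digit p x k * digit p y k) % p : ℕ) : ℤ_[p]) * (p : ℤ_[p]) ^ k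

open PadicInt Finset

noncomputable def digitSeries (c : ℕ → ℕ) : ℤ_[p] := ∑' k, (c k : ℤ_[p]) * (p : ℤ_[p]) ^ k

noncomputable def digitSingle (j a : ℕ) : ℤ_[p] := digitSeries p (Pi.single j (a % p))

noncomputable def truncate (x : ℤ_[p]) (n : ℕ) : ℤ_[p] :=
  digitSeries p fun k => if k < n then digit p x k else 0

section Digits

variable {p}

lemma eq_of_natCast_zmod_eq {n a b : ℕ} (ha : a < n) (hb : b < n) (h : (a : ZMod n) = b) :
    a = b := by
  rwa [ZMod.natCast_eq_natCast_iff', Nat.mod_eq_of_lt ha, Nat.mod_eq_of_lt hb] at h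

lemma eq_zero_of_add_self_mod_eq {n d : ℕ} (hd : d < n) (h : (d + d) % n = d) : d = 0 := by
  refine eq_of_natCast_zmod_eq hd (Nat.zero_lt_of_lt hd) ?_
  have h' := congrArg (Nat.cast : ℕ → ZMod n) h
  push_cast [ZMod.natCast_mod] at h'
  simpa using h'

lemma eq_zero_or_one_of_mul_self_mod_eq {c : ℕ} (hc : c < p) (h : c * c % p = c) :
    c = 0 ∨ c = 1 := by
  have h' : IsIdempotentElem (c : ZMod p) := by
    have := congrArg (Nat.cast : ℕ → ZMod p) h
    push_cast [ZMod.natCast_mod] at this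
    exact this
  refine (IsIdempotentElem.iff_eq_zero_or_one.mp h').imp (fun h0 => ?_) (fun h1 => ?_)
  · exact eq_of_natCast_zmod_eq hc (Nat.pos_of_neZero p) (by simpa using h0)
  · exact eq_of_natCast_zmod_eq hc Fact.out (by simpa using h1)

lemma digit_lt (x : ℤ_[p]) (k : ℕ) : digit p x k < p := by
  rw [digit, Nat.div_lt_iff_lt_mul (Nat.pos_of_neZero _), ← pow_succ']
  exact appr_lt x (k + 1)

lemma appr_succ (x : ℤ_[p]) (k : ℕ) : x.appr (k + 1) = x.appr k + digit p x k * p ^ k := by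
  obtain ⟨t, ht⟩ := dvd_appr_sub_appr x k (k + 1) (Nat.le_add_right k 1)
  have hmono := appr_mono x (Nat.le_add_right k 1)
  have hx : x.appr (k + 1) = x.appr k + p ^ k * t := by omega
  have ht : digit p x k = t := by
    rw [digit, hx, Nat.add_mul_div_left _ _ (Nat.pos_of_neZero _),
      Nat.div_eq_of_lt (appr_lt x k), zero_add]
  rw [hx, ht, mul_comm]

lemma appr_eq_sum_digit (x : ℤ_[p]) (n : ℕ) :
    x.appr n = ∑ k ∈ range n, digit p x k * p ^ k := by
  induction n with
  | zero => simp [appr]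
  | succ n ih => rw [appr_succ, sum_range_succ, ih]

lemma appr_eq_of_sub_mem_span {x : ℤ_[p]} {n a : ℕ} (ha : a < p ^ n)
    (h : x - a ∈ Ideal.span {(p : ℤ_[p]) ^ n}) : x.appr n = a := by
  have := zmod_congr_of_sub_mem_span n x _ _ (appr_spec n x) h
  rwa [ZMod.natCast_eq_natCast_iff', Nat.mod_eq_of_lt (appr_lt x n), Nat.mod_eq_of_lt ha] at this

lemma norm_sub_le_pow_iff_appr_eq (x y : ℤ_[p]) (n : ℕ) :
    ‖x - y‖ ≤ (p : ℝ) ^ (-n : ℤ) ↔ x.appr n = y.appr n := by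
  rw [norm_le_pow_iff_mem_span_pow]
  constructor
  · intro h
    refine appr_eq_of_sub_mem_span (appr_lt y n) ?_
    simpa using Ideal.add_mem _ h (appr_spec n y)
  · intro h
    simpa [h] using Ideal.sub_mem _ (appr_spec n x) (appr_spec n y)

lemma norm_sub_le_pow_iff_digit_eq (x y : ℤ_[p]) (n : ℕ) :
    ‖x - y‖ ≤ (p : ℝ) ^ (-n : ℤ) ↔ ∀ k < n, digit p x k = digit p y k := by
  constructor
  · intro h k hk
    have hle : (p : ℝ) ^ (-n : ℤ) ≤ (p : ℝ) ^ (-(k + 1 : ℕ) : ℤ) :=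
      zpow_le_zpow_right₀ (mod_cast (Nat.pos_of_neZero p)) (by omega)
    rw [digit, digit, (norm_sub_le_pow_iff_appr_eq x y (k + 1)).mp (h.trans hle)]
  · intro h
    rw [norm_sub_le_pow_iff_appr_eq, appr_eq_sum_digit, appr_eq_sum_digit]
    exact sum_congr rfl fun k hk => by rw [h k (mem_range.mp hk)]

lemma eq_of_digit_eq {x y : ℤ_[p]} (h : ∀ k, digit p x k = digit p y k) : x = y :=
  ext_of_toZModPow.mp fun n =>
    congrArg Nat.cast <| (norm_sub_le_pow_iff_appr_eq x y n).mp <|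
      (norm_sub_le_pow_iff_digit_eq x y n).mpr fun k _ => h k

lemma digit_zero (k : ℕ) : digit p (0 : ℤ_[p]) k = 0 := by
  rw [digit, appr_eq_of_sub_mem_span (a := 0) (Nat.pos_of_neZero _) (by simp), Nat.zero_div]

lemma summable_digitSeries (c : ℕ → ℕ) :
    Summable fun k => (c k : ℤ_[p]) * (p : ℤ_[p]) ^ k := by
  refine Summable.of_norm_bounded (g := fun k => ((p : ℝ)⁻¹) ^ k)
    (summable_geometric_of_lt_one (by positivity) (inv_lt_one_of_one_lt₀ (mod_cast Fact.out)))
    fun k => ?_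
  rw [norm_mul, norm_p_pow, zpow_neg, zpow_natCast, inv_pow]
  exact mul_le_of_le_one_left (by positivity) (norm_le_one _)

lemma digitSeries_sub_sum_mem_span (c : ℕ → ℕ) (n : ℕ) :
    digitSeries p c - ∑ k ∈ range n, (c k : ℤ_[p]) * (p : ℤ_[p]) ^ k ∈
      Ideal.span {(p : ℤ_[p]) ^ n} := by
  rw [digitSeries, ← (summable_digitSeries c).sum_add_tsum_nat_add n, add_sub_cancel_left,
    Ideal.mem_span_singleton]
  refine ⟨∑' k, (c (k + n) : ℤ_[p]) * (p : ℤ_[p]) ^ k, ?_⟩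
  rw [← (summable_digitSeries fun k => c (k + n)).tsum_mul_left]
  exact tsum_congr fun k => by ring

lemma sum_mul_pow_lt {b : ℕ} {c : ℕ → ℕ} (hc : ∀ k, c k < b) (n : ℕ) :
    ∑ k ∈ range n, c k * b ^ k < b ^ n := by
  induction n with
  | zero => simp
  | succ n ih =>
    calc ∑ k ∈ range (n + 1), c k * b ^ k
        < (c n + 1) * b ^ n := by rw [sum_range_succ]; linarith
      _ ≤ b * b ^ n := Nat.mul_le_mul_right _ (hc n)
      _ = b ^ (n + 1) := (pow_succ' b n).symm

lemma digit_digitSeries {c : ℕ → ℕ} (hc : ∀ k, c k < p) (n : ℕ) :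
    digit p (digitSeries p c) n = c n := by
  have happr : (digitSeries p c).appr (n + 1) = ∑ k ∈ range (n + 1), c k * p ^ k :=
    appr_eq_of_sub_mem_span (sum_mul_pow_lt hc _) (by
      push_cast; exact digitSeries_sub_sum_mem_span c _)
  rw [digit, happr, sum_range_succ, Nat.add_mul_div_right _ _ (Nat.pos_of_neZero _),
    Nat.div_eq_of_lt (sum_mul_pow_lt hc n), zero_add]

lemma digit_pXOR (x y : ℤ_[p]) (k : ℕ) :
    digit p (pXOR p x y) k = (digit p x k + digit p y k) % p :=
  digit_digitSeries (fun _ => Nat.mod_lt _ (Nat.pos_of_neZero _)) k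

lemma digit_pAND (x y : ℤ_[p]) (k : ℕ) :
    digit p (pAND p x y) k = digit p x k * digit p y k % p :=
  digit_digitSeries (fun _ => Nat.mod_lt _ (Nat.pos_of_neZero _)) k

lemma digit_digitSingle (j a k : ℕ) :
    digit p (digitSingle p j a) k = (Pi.single j (a % p) : ℕ → ℕ) k := by
  refine digit_digitSeries (fun i => ?_) k
  rcases eq_or_ne i j with rfl | h
  · simpa using Nat.mod_lt _ (Nat.pos_of_neZero _)
  · simpa [h] using Nat.pos_of_neZero _

lemma digit_truncate (x : ℤ_[p]) (n k : ℕ) :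
    digit p (truncate p x n) k = if k < n then digit p x k else 0 :=
  digit_digitSeries (fun i => by split_ifs <;> simp [digit_lt, Nat.pos_of_neZero]) k

lemma digitSingle_zero (j : ℕ) : digitSingle p j 0 = 0 :=
  eq_of_digit_eq fun k => by simp [digit_digitSingle, digit_zero]

lemma pXOR_digitSingle (j a b : ℕ) :
    pXOR p (digitSingle p j a) (digitSingle p j b) = digitSingle p j (a + b) :=
  eq_of_digit_eq fun k => by
    rcases eq_or_ne k j with rfl | h
    · simp [digit_pXOR, digit_digitSingle, Nat.add_mod]
    · simp [digit_pXOR, digit_digitSingle, h]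

lemma pAND_digitSingle (j a b : ℕ) :
    pAND p (digitSingle p j a) (digitSingle p j b) = digitSingle p j (a * b) :=
  eq_of_digit_eq fun k => by
    rcases eq_or_ne k j with rfl | h
    · simp [digit_pAND, digit_digitSingle, Nat.mul_mod]
    · simp [digit_pAND, digit_digitSingle, h]

lemma pAND_digitSingle_of_ne {i j : ℕ} (hij : i ≠ j) (a b : ℕ) :
    pAND p (digitSingle p i a) (digitSingle p j b) = 0 :=
  eq_of_digit_eq fun k => by
    rcases eq_or_ne k i with rfl | h
    · simp [digit_pAND, digit_digitSingle, digit_zero, hij]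
    · simp [digit_pAND, digit_digitSingle, digit_zero, h]

lemma pXOR_zero_zero : pXOR p 0 0 = 0 :=
  eq_of_digit_eq fun k => by simp [digit_pXOR, digit_zero]

lemma truncate_zero (x : ℤ_[p]) : truncate p x 0 = 0 :=
  eq_of_digit_eq fun k => by simp [digit_truncate, digit_zero]

lemma truncate_succ (x : ℤ_[p]) (n : ℕ) :
    truncate p x (n + 1) = pXOR p (truncate p x n) (digitSingle p n (digit p x n)) :=
  eq_of_digit_eq fun k => by
    simp only [digit_pXOR, digit_truncate, digit_digitSingle, Pi.single_apply,
      Nat.mod_eq_of_lt (digit_lt x _)]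
    rcases lt_trichotomy k n with h | rfl | h
    · simp [h, h.ne, Nat.lt_succ_of_lt h, Nat.mod_eq_of_lt (digit_lt x k)]
    · simp [Nat.mod_eq_of_lt (digit_lt x k)]
    · simp [h.ne', show ¬k < n + 1 by omega, show ¬k < n by omega]

lemma norm_sub_truncate_le (x : ℤ_[p]) (n : ℕ) :
    ‖x - truncate p x n‖ ≤ (p : ℝ) ^ (-n : ℤ) :=
  (norm_sub_le_pow_iff_digit_eq _ _ _).mpr fun k hk => by rw [digit_truncate, if_pos hk]

lemma continuous_digit (k : ℕ) : Continuous fun x : ℤ_[p] => digit p x k := by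
  refine IsLocallyConstant.continuous ((IsLocallyConstant.iff_eventually_eq _).mpr fun x => ?_)
  have hp : (0 : ℝ) < p := Nat.cast_pos.mpr (Nat.pos_of_neZero p)
  filter_upwards [Metric.closedBall_mem_nhds x (zpow_pos hp (-(k + 1 : ℕ) : ℤ))] with y hy
  rw [Metric.mem_closedBall, dist_eq_norm] at hy
  exact (norm_sub_le_pow_iff_digit_eq y x (k + 1)).mp hy k k.lt_succ_self

end Digits

lemma MeasureTheory.MeasurePreserving.nonempty_preimage_of_isOpen {α β : Type*}
    [MeasurableSpace α] [MeasurableSpace β] [TopologicalSpace β] [OpensMeasurableSpace β]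
    {μ : Measure α} {ν : Measure β} [ν.IsOpenPosMeasure] {f : α → β}
    (hf : MeasurePreserving f μ ν) {s : Set β} (hs : IsOpen s) (hne : s.Nonempty) :
    (f ⁻¹' s).Nonempty :=
  nonempty_of_measure_ne_zero <|
    (hf.measure_preimage hs.measurableSet.nullMeasurableSet).trans_ne (hs.measure_ne_zero ν hne)

instance : (haarZp p).IsAddHaarMeasure := Measure.isAddHaarMeasure_addHaarMeasure ⊤

section Morphism

variable {p} {f : ℤ_[p] → ℤ_[p]}

lemma map_zero_of_map_pXOR (hxor : ∀ x y : ℤ_[p], f (pXOR p x y) = pXOR p (f x) (f y)) :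
    f 0 = 0 :=
  eq_of_digit_eq fun k => by
    have h := congrArg (digit p · k) (hxor 0 0)
    simp only [pXOR_zero_zero, digit_pXOR] at h
    rw [digit_zero]
    exact eq_zero_of_add_self_mod_eq (digit_lt _ _) h.symm

lemma digit_map_digitSingle (hxor : ∀ x y : ℤ_[p], f (pXOR p x y) = pXOR p (f x) (f y))
    (j a k : ℕ) :
    digit p (f (digitSingle p j a)) k = a * digit p (f (digitSingle p j 1)) k % p := by
  induction a with
  | zero => simp [digitSingle_zero, map_zero_of_map_pXOR hxor, digit_zero]
  | succ a ih => rw [← pXOR_digitSingle, hxor, digit_pXOR, ih, Nat.mod_add_mod, Nat.succ_mul]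

lemma digit_map_digitSingle_one_eq_zero_or_one
    (hand : ∀ x y : ℤ_[p], f (pAND p x y) = pAND p (f x) (f y)) (j k : ℕ) :
    digit p (f (digitSingle p j 1)) k = 0 ∨ digit p (f (digitSingle p j 1)) k = 1 :=
  eq_zero_or_one_of_mul_self_mod_eq (digit_lt _ _) <| by
    rw [← digit_pAND, ← hand, pAND_digitSingle, one_mul]

lemma digit_map_digitSingle_one_eq_zero_of_ne
    (hxor : ∀ x y : ℤ_[p], f (pXOR p x y) = pXOR p (f x) (f y))
    (hand : ∀ x y : ℤ_[p], f (pAND p x y) = pAND p (f x) (f y)) {i j : ℕ} (hij : i ≠ j) {k : ℕ}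
    (hi : digit p (f (digitSingle p i 1)) k ≠ 0) : digit p (f (digitSingle p j 1)) k = 0 := by
  have hcross : digit p (f (digitSingle p i 1)) k * digit p (f (digitSingle p j 1)) k % p = 0 := by
    rw [← digit_pAND, ← hand, pAND_digitSingle_of_ne hij, map_zero_of_map_pXOR hxor, digit_zero]
  refine (digit_map_digitSingle_one_eq_zero_or_one hand j k).resolve_right fun hj => ?_
  rw [(digit_map_digitSingle_one_eq_zero_or_one hand i k).resolve_left hi, hj, one_mul,
    Nat.mod_eq_of_lt Fact.out] at hcross
  exact one_ne_zero hcross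

lemma digit_map_truncate (hxor : ∀ x y : ℤ_[p], f (pXOR p x y) = pXOR p (f x) (f y))
    (x : ℤ_[p]) (n k : ℕ) :
    digit p (f (truncate p x n)) k =
      (∑ j ∈ range n, digit p x j * digit p (f (digitSingle p j 1)) k) % p := by
  induction n with
  | zero => simp [truncate_zero, map_zero_of_map_pXOR hxor, digit_zero]
  | succ n ih =>
    rw [truncate_succ, hxor, digit_pXOR, ih, digit_map_digitSingle hxor, sum_range_succ,
      ← Nat.add_mod]

lemma digit_map_eq_digit_map_truncate (hlip : ∀ x y : ℤ_[p], ‖f x - f y‖ ≤ ‖x - y‖)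
    (x : ℤ_[p]) (k : ℕ) : digit p (f x) k = digit p (f (truncate p x (k + 1))) k :=
  (norm_sub_le_pow_iff_digit_eq _ _ (k + 1)).mp
    ((hlip _ _).trans (norm_sub_truncate_le x _)) k k.lt_succ_self

lemma digit_map_eq_zero_or_digit (hlip : ∀ x y : ℤ_[p], ‖f x - f y‖ ≤ ‖x - y‖)
    (hxor : ∀ x y : ℤ_[p], f (pXOR p x y) = pXOR p (f x) (f y))
    (hand : ∀ x y : ℤ_[p], f (pAND p x y) = pAND p (f x) (f y)) (k : ℕ) :
    (∀ x, digit p (f x) k = 0) ∨ ∃ j ≤ k, ∀ x, digit p (f x) k = digit p x j := by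
  have hsum (x : ℤ_[p]) : digit p (f x) k =
      (∑ j ∈ range (k + 1), digit p x j * digit p (f (digitSingle p j 1)) k) % p := by
    rw [digit_map_eq_digit_map_truncate hlip, digit_map_truncate hxor]
  by_cases hzero : ∀ j < k + 1, digit p (f (digitSingle p j 1)) k = 0
  · refine .inl fun x => ?_
    rw [hsum, sum_eq_zero fun j hj => by rw [hzero j (mem_range.mp hj), mul_zero], Nat.zero_mod]
  · push Not at hzero
    obtain ⟨i, hik, hi⟩ := hzero
    refine .inr ⟨i, Nat.lt_succ_iff.mp hik, fun x => ?_⟩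
    rw [hsum, sum_eq_single i (fun j _ hj => by
        rw [digit_map_digitSingle_one_eq_zero_of_ne hxor hand (Ne.symm hj) hi, mul_zero])
      (fun h => absurd (mem_range.mpr hik) h),
      (digit_map_digitSingle_one_eq_zero_or_one hand i k).resolve_left hi, mul_one,
      Nat.mod_eq_of_lt (digit_lt x i)]

lemma digit_map_eq_digit (hlip : ∀ x y : ℤ_[p], ‖f x - f y‖ ≤ ‖x - y‖)
    (hmp : MeasurePreserving f (haarZp p) (haarZp p))
    (hxor : ∀ x y : ℤ_[p], f (pXOR p x y) = pXOR p (f x) (f y))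
    (hand : ∀ x y : ℤ_[p], f (pAND p x y) = pAND p (f x) (f y)) (k : ℕ) (x : ℤ_[p]) :
    digit p (f x) k = digit p x k := by
  induction k using Nat.strong_induction_on generalizing x with
  | _ k ih =>
  rcases digit_map_eq_zero_or_digit hlip hxor hand k with hzero | ⟨j, hjk, hj⟩
  · obtain ⟨y, hy⟩ := hmp.nonempty_preimage_of_isOpen
      ((isOpen_discrete {1}).preimage (continuous_digit k))
      ⟨digitSingle p k 1, by simp [digit_digitSingle, Nat.mod_eq_of_lt Fact.out]⟩
    simp [hzero y] at hy
  · rcases hjk.lt_or_eq with hlt | rfl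
    · obtain ⟨y, hy⟩ := hmp.nonempty_preimage_of_isOpen
        (isOpen_ne_fun (continuous_digit k) (continuous_digit j))
        ⟨digitSingle p k 1, by simp [digit_digitSingle, hlt.ne, Nat.mod_eq_of_lt Fact.out]⟩
      exact absurd (by rw [hj y, ih j hlt y]) hy
    · exact hj x

end Morphism

theorem stmt_15 (f : ℤ_[p] → ℤ_[p])
    (hlip : ∀ x y : ℤ_[p], ‖f x - f y‖ ≤ ‖x - y‖)
    (hmp : MeasurePreserving f (haarZp p) (haarZp p))
    (hxor : ∀ x y : ℤ_[p], f (pXOR p x y) = pXOR p (f x) (f y))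
    (hand : ∀ x y : ℤ_[p], f (pAND p x y) = pAND p (f x) (f y)) :
    ∀ x : ℤ_[p], f x = x :=
  fun x => eq_of_digit_eq fun k => digit_map_eq_digit hlip hmp hxor hand k x
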